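/- In the positive singular braid monoid SBKLₙ⁺, for every pair (t,s) with 1 ≤ s < t ≤ n the fundamental element δ = a_{n(n−1)}a_{(n−1)(n−2)}⋯a_{21} satisfies δ = a_{ts} · a_{n(n−1)}a_{(n−1)(n−2)}⋯a_{(t+2)(t+1)} · a_{(t+1)s} · a_{t(t−1)}⋯a_{(s+2)(s+1)} · a_{s(s−1)}⋯a_{21}; in particular δ is left-divisible (and right-divisible) in SBKLₙ⁺ by every generator a_{ts}. -/

import Mathlib

/-!
STATEMENT 10: In the positive singular braid monoid SBKLₙ⁺, for every pair
(t,s) with 1 ≤ s < t ≤ n the fundamental element δ = a_{n(n−1)}⋯a_{21}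
satisfies δ = a_{ts} · a_{n(n−1)}⋯a_{(t+2)(t+1)} · a_{(t+1)s} ·
a_{t(t−1)}⋯a_{(s+2)(s+1)} · a_{s(s−1)}⋯a_{21}; in particular δ is
left-divisible and right-divisible by every generator a_{ts}.
(For t = n the factors involving the index t+1 are absent; accordingly the
helper `ag` below is the unit on out-of-range indices.)
-/
open FreeMonoid

/-- Index pairs `(t, s)` with `1 ≤ s < t ≤ n`. -/
def SPair (n : ℕ) : Type := {p : ℕ × ℕ // 1 ≤ p.2 ∧ p.2 < p.1 ∧ p.1 ≤ n}

/-- The Birman–Ko–Lee generators of the positive singular braid monoid: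
`a_{ts}` and `b_{ts}` for `1 ≤ s < t ≤ n`. -/
inductive PGen (n : ℕ) : Type
  | a (p : SPair n) : PGen n
  | b (p : SPair n) : PGen n

/-- `a_{ts}` as an element of the free monoid on the generators (the unit if
the indices are invalid). -/
def ag (n t s : ℕ) : FreeMonoid (PGen n) :=
  if h : 1 ≤ s ∧ s < t ∧ t ≤ n then of (PGen.a ⟨(t, s), h⟩) else 1

/-- `b_{ts}` as an element of the free monoid on the generators. -/
def bg (n t s : ℕ) : FreeMonoid (PGen n) :=
  if h : 1 ≤ s ∧ s < t ∧ t ≤ n then of (PGen.b ⟨(t, s), h⟩) else 1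

/-- The defining relations of the positive singular braid monoid `SBKLₙ⁺`. -/
inductive posRel (n : ℕ) : FreeMonoid (PGen n) → FreeMonoid (PGen n) → Prop
  | comm_aa (t s r q : ℕ) (h₁ : 1 ≤ s ∧ s < t ∧ t ≤ n) (h₂ : 1 ≤ q ∧ q < r ∧ r ≤ n)
      (h : 0 < ((t : ℤ) - r) * ((t : ℤ) - q) * ((s : ℤ) - r) * ((s : ℤ) - q)) :
      posRel n (ag n t s * ag n r q) (ag n r q * ag n t s)
  | band₁ (t s r : ℕ) (h₁ : 1 ≤ r) (h₂ : r < s) (h₃ : s < t) (h₄ : t ≤ n) :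
      posRel n (ag n t s * ag n s r) (ag n t r * ag n t s)
  | band₂ (t s r : ℕ) (h₁ : 1 ≤ r) (h₂ : r < s) (h₃ : s < t) (h₄ : t ≤ n) :
      posRel n (ag n t r * ag n t s) (ag n s r * ag n t r)
  | comm_ab (t s r q : ℕ) (h₁ : 1 ≤ s ∧ s < t ∧ t ≤ n) (h₂ : 1 ≤ q ∧ q < r ∧ r ≤ n)
      (h : 0 < ((t : ℤ) - r) * ((t : ℤ) - q) * ((s : ℤ) - r) * ((s : ℤ) - q)) :
      posRel n (ag n t s * bg n r q) (bg n r q * ag n t s)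
  | comm_ab' (t s : ℕ) (h : 1 ≤ s ∧ s < t ∧ t ≤ n) :
      posRel n (ag n t s * bg n t s) (bg n t s * ag n t s)
  | mixed₁ (t s r : ℕ) (h₁ : 1 ≤ r) (h₂ : r < s) (h₃ : s < t) (h₄ : t ≤ n) :
      posRel n (ag n t s * bg n s r) (bg n t r * ag n t s)
  | mixed₂ (t s r : ℕ) (h₁ : 1 ≤ r) (h₂ : r < s) (h₃ : s < t) (h₄ : t ≤ n) :
      posRel n (ag n s r * bg n t r) (bg n t s * ag n s r)
  | mixed₃ (t s r : ℕ) (h₁ : 1 ≤ r) (h₂ : r < s) (h₃ : s < t) (h₄ : t ≤ n) :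
      posRel n (ag n t r * bg n t s) (bg n s r * ag n t r)
  | comm_bb (t s r q : ℕ) (h₁ : 1 ≤ s ∧ s < t ∧ t ≤ n) (h₂ : 1 ≤ q ∧ q < r ∧ r ≤ n)
      (h : 0 < ((t : ℤ) - r) * ((t : ℤ) - q) * ((s : ℤ) - r) * ((s : ℤ) - q)) :
      posRel n (bg n t s * bg n r q) (bg n r q * bg n t s)

/-- The positive singular braid monoid `SBKLₙ⁺`. -/
def PosSBKL (n : ℕ) : Type := PresentedMonoid (posRel n)

instance (n : ℕ) : Monoid (PosSBKL n) :=
  inferInstanceAs (Monoid (PresentedMonoid (posRel n)))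

/-- The descending chain `a_{hi,hi-1} a_{hi-1,hi-2} ⋯` of length `len`, as a
word in the free monoid on the generators. -/
def aChain (n hi len : ℕ) : FreeMonoid (PGen n) :=
  ((List.range len).map (fun j => ag n (hi - j) (hi - j - 1))).prod

/-- The fundamental word `δ = a_{n(n−1)}a_{(n−1)(n−2)}⋯a_{21}`. -/
def deltaWord (n : ℕ) : FreeMonoid (PGen n) := aChain n n (n - 1)

/-- The canonical projection from the free monoid to `SBKLₙ⁺`. -/
def wordM (n : ℕ) (w : FreeMonoid (PGen n)) : PosSBKL n :=
  PresentedMonoid.mk (posRel n) w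

/-- `a_{ts}` as an element of `SBKLₙ⁺`. -/
def aM (n t s : ℕ) : PosSBKL n := wordM n (ag n t s)

/-- `b_{ts}` as an element of `SBKLₙ⁺`. -/
def bM (n t s : ℕ) : PosSBKL n := wordM n (bg n t s)

/-- The fundamental element `δ` of `SBKLₙ⁺`. -/
def deltaM (n : ℕ) : PosSBKL n := wordM n (deltaWord n)

/-!
Write `A(i..j)` for the descending chain `a_{i,i-1} ⋯ a_{j+1,j}`, so that
`δ = A(n..1) = A(n..t) · A(t..s) · A(s..1)`. By the band relation
`a_{rs} a_{r,r-1} = a_{r,r-1} a_{r-1,s}`, the factor `a_{ts}` slides along `A(t..s+1)`, its first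
index dropping by one at each step, until it becomes the missing last factor `a_{s+1,s}`; thus
`a_{ts} · A(t..s+1) = A(t..s)`. It is then moved to the front through `A(n..t)`, using
`a_{t+1,t} a_{ts} = a_{ts} a_{t+1,s}` and the fact that `a_{ts}` commutes with every `a_{r,r-1}`,
`r > t + 1`. Right divisibility is the mirror argument: `A(t..s) = A(t-1..s) · a_{ts}` and
`a_{ts} · A(s..1) = a_{t,s-1} · A(s-1..1) · a_{ts}`.
-/

section

variable {n : ℕ}

theorem wordM_mul (u v : FreeMonoid (PGen n)) : wordM n (u * v) = wordM n u * wordM n v :=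
  map_mul _ u v

theorem wordM_eq_of_posRel {u v : FreeMonoid (PGen n)} (h : posRel n u v) :
    wordM n u = wordM n v :=
  Quotient.sound (ConGen.Rel.of u v h)

theorem aM_eq_one {t s : ℕ} (h : ¬(1 ≤ s ∧ s < t ∧ t ≤ n)) : aM n t s = 1 := by
  rw [aM, ag, dif_neg h]
  rfl

theorem aM_band₁ {t s r : ℕ} (hr : 1 ≤ r) (hrs : r < s) (hst : s < t) (ht : t ≤ n) :
    aM n t s * aM n s r = aM n t r * aM n t s :=
  wordM_eq_of_posRel (posRel.band₁ t s r hr hrs hst ht)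

theorem aM_band₂ {t s r : ℕ} (hr : 1 ≤ r) (hrs : r < s) (hst : s < t) (ht : t ≤ n) :
    aM n t r * aM n t s = aM n s r * aM n t r :=
  wordM_eq_of_posRel (posRel.band₂ t s r hr hrs hst ht)

theorem commute_aM_aM_pred {t s r : ℕ} (hv : 1 ≤ s ∧ s < t ∧ t ≤ n)
    (hs : s ∉ Set.Icc (r - 1) r) (ht : t ∉ Set.Icc (r - 1) r) :
    Commute (aM n t s) (aM n r (r - 1)) := by
  by_cases hr : 1 ≤ r - 1 ∧ r - 1 < r ∧ r ≤ n
  · refine wordM_eq_of_posRel (posRel.comm_aa t s r (r - 1) hv hr ?_)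
    -- No index lies strictly between `r - 1` and `r`, so the two chords cannot cross.
    have outside : ∀ x : ℕ, x ∉ Set.Icc (r - 1) r →
        0 < ((x : ℤ) - r) * ((x : ℤ) - (r - 1 : ℕ)) := by
      intro x hx
      rw [Set.mem_Icc] at hx
      rcases (by omega : x < r - 1 ∨ r < x) with h | h
      · exact mul_pos_of_neg_of_neg (by omega) (by omega)
      · exact mul_pos (by omega) (by omega)
    simpa only [← mul_assoc] using mul_pos (outside t ht) (outside s hs)
  · rw [aM_eq_one hr]
    exact Commute.one_right _

theorem aChain_add (hi l₁ l₂ : ℕ) :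
    aChain n hi (l₁ + l₂) = aChain n hi l₁ * aChain n (hi - l₁) l₂ := by
  simp only [aChain, List.range_add, List.map_append, List.prod_append, List.map_map,
    Function.comp_def, Nat.sub_add_eq]

theorem aChain_one (hi : ℕ) : aChain n hi 1 = ag n hi (hi - 1) := by
  simp [aChain]

def aChainM (n hi len : ℕ) : PosSBKL n := wordM n (aChain n hi len)

theorem aChainM_zero (hi : ℕ) : aChainM n hi 0 = 1 := rfl

theorem aChainM_add (hi l₁ l₂ : ℕ) :
    aChainM n hi (l₁ + l₂) = aChainM n hi l₁ * aChainM n (hi - l₁) l₂ := by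
  rw [aChainM, aChain_add, wordM_mul]
  rfl

theorem aChainM_one (hi : ℕ) : aChainM n hi 1 = aM n hi (hi - 1) := by
  rw [aChainM, aChain_one]
  rfl

theorem aChainM_succ (hi len : ℕ) :
    aChainM n hi (len + 1) = aM n hi (hi - 1) * aChainM n (hi - 1) len := by
  rw [add_comm, aChainM_add, aChainM_one]

theorem aChainM_succ' (hi len : ℕ) :
    aChainM n hi (len + 1) = aChainM n hi len * aM n (hi - len) (hi - len - 1) := by
  rw [aChainM_add, aChainM_one]

theorem commute_aM_aChainM {t s : ℕ} (hv : 1 ≤ s ∧ s < t ∧ t ≤ n) (hi len : ℕ)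
    (hs : s ∉ Set.Icc (hi - len) hi) (ht : t ∉ Set.Icc (hi - len) hi) :
    Commute (aM n t s) (aChainM n hi len) := by
  induction len generalizing hi with
  | zero => exact Commute.one_right _
  | succ len ih =>
    simp only [Set.mem_Icc] at hs ht
    rw [aChainM_succ]
    refine (commute_aM_aM_pred hv ?_ ?_).mul_right (ih (hi - 1) ?_ ?_) <;>
      simp only [Set.mem_Icc] <;> omega

theorem deltaM_eq_aChainM_mul {t s : ℕ} (hs : 1 ≤ s) (hst : s ≤ t) (ht : t ≤ n) :
    deltaM n = aChainM n n (n - t) * aChainM n t (t - s) * aChainM n s (s - 1) := by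
  have hsplit : n - 1 = (n - t) + ((t - s) + (s - 1)) := by omega
  rw [deltaM, deltaWord, ← aChainM, hsplit, aChainM_add, aChainM_add, ← mul_assoc,
    Nat.sub_sub_self ht, Nat.sub_sub_self hst]

theorem aM_mul_aChainM {s : ℕ} (hs : 1 ≤ s) (d : ℕ) (ht : s + d + 1 ≤ n) :
    aM n (s + d + 1) s * aChainM n (s + d + 1) d = aChainM n (s + d + 1) (d + 1) := by
  induction d with
  | zero => rw [aChainM_zero, mul_one, aChainM_one]; rfl
  | succ d ih =>
    rw [← Nat.add_assoc] at ht ⊢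
    rw [aChainM_succ _ (d + 1), aChainM_succ, Nat.add_sub_cancel, ← mul_assoc,
      ← aM_band₁ hs (by omega : s < s + d + 1) (by omega) ht, mul_assoc, ih (by omega)]

theorem aChainM_mul_aM (d : ℕ) {s : ℕ} (hs : 1 ≤ s) (ht : s + d + 1 ≤ n) :
    aChainM n (s + d) d * aM n (s + d + 1) s = aChainM n (s + d + 1) (d + 1) := by
  induction d generalizing s with
  | zero => rw [aChainM_zero, one_mul, aChainM_one]; rfl
  | succ d ih =>
    have ih' := ih (by omega : 1 ≤ s + 1) (by omega)
    have hK := aM_mul_aChainM hs (d + 1) ht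
    rw [Nat.add_right_comm s 1 d] at ih'
    rw [← Nat.add_assoc] at ht hK ⊢
    have hb := aM_band₂ hs (by omega : s < s + 1) (by omega : s + 1 < s + d + 1 + 1) ht
    have hc := commute_aM_aChainM ⟨hs, by omega, ht⟩ (s + d + 1) d
      (by simp only [Set.mem_Icc]; omega) (by simp only [Set.mem_Icc]; omega)
    rw [aChainM_succ', show s + d + 1 - d = s + 1 by omega, Nat.add_sub_cancel, mul_assoc, ← hb,
      ← mul_assoc, ← hc.eq, mul_assoc, ih', hK]

theorem aChainM_top_mul_aM {t s : ℕ} (hs : 1 ≤ s) (hst : s < t) (ht : t ≤ n) :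
    aChainM n n (n - t) * aM n t s = aM n t s * (aChainM n n (n - t - 1) * aM n (t + 1) s) := by
  rcases ht.eq_or_lt with rfl | ht
  · rw [Nat.sub_self, aChainM_zero, aM_eq_one (t := t + 1) (by omega)]
    simp only [one_mul, mul_one]
  · obtain ⟨k, hk⟩ : ∃ k, n - t = k + 1 := ⟨n - t - 1, by omega⟩
    have hc := commute_aM_aChainM ⟨hs, hst, ht.le⟩ n k
      (by simp only [Set.mem_Icc]; omega) (by simp only [Set.mem_Icc]; omega)
    rw [hk, Nat.add_sub_cancel, aChainM_succ', show n - k = t + 1 by omega, Nat.add_sub_cancel,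
      mul_assoc, aM_band₁ hs hst (by omega) ht, aM_band₂ hs hst (by omega) ht, ← mul_assoc,
      ← hc.eq, mul_assoc]

theorem aM_mul_aChainM_bottom {t s : ℕ} (hs : 1 ≤ s) (hst : s < t) (ht : t ≤ n) :
    aM n t s * aChainM n s (s - 1) =
      aM n t (s - 1) * aChainM n (s - 1) (s - 2) * aM n t s := by
  rcases hs.eq_or_lt with rfl | hs
  · rw [aM_eq_one (s := 1 - 1) (by omega)]
    simp [aChainM_zero]
  · obtain ⟨k, hk⟩ : ∃ k, s - 1 = k + 1 := ⟨s - 2, by omega⟩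
    have hc := commute_aM_aChainM ⟨by omega, hst, ht⟩ (s - 1) k
      (by simp only [Set.mem_Icc]; omega) (by simp only [Set.mem_Icc]; omega)
    rw [hk, aChainM_succ, show s - 2 = k by omega, ← mul_assoc,
      aM_band₁ (by omega) (by omega) hst ht, mul_assoc, hc.eq, ← mul_assoc, hk]

theorem deltaM_eq_aM_mul {t s : ℕ} (hs : 1 ≤ s) (hst : s < t) (ht : t ≤ n) :
    deltaM n = aM n t s * (aChainM n n (n - t - 1) * aM n (t + 1) s *
      aChainM n t (t - s - 1) * aChainM n s (s - 1)) := by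
  obtain ⟨d, rfl⟩ : ∃ d, t = s + d + 1 := ⟨t - s - 1, by omega⟩
  rw [deltaM_eq_aChainM_mul hs hst.le ht, show s + d + 1 - s - 1 = d by omega,
    show s + d + 1 - s = d + 1 by omega, ← aM_mul_aChainM hs d ht, ← mul_assoc,
    aChainM_top_mul_aM hs hst ht]
  simp only [mul_assoc]

theorem deltaM_eq_mul_aM {t s : ℕ} (hs : 1 ≤ s) (hst : s < t) (ht : t ≤ n) :
    deltaM n = aChainM n n (n - t) * aChainM n (t - 1) (t - s - 1) * aM n t (s - 1) *
      aChainM n (s - 1) (s - 2) * aM n t s := by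
  obtain ⟨d, rfl⟩ : ∃ d, t = s + d + 1 := ⟨t - s - 1, by omega⟩
  rw [deltaM_eq_aChainM_mul hs hst.le ht, show s + d + 1 - s - 1 = d by omega,
    show s + d + 1 - s = d + 1 by omega, Nat.add_sub_cancel, ← aChainM_mul_aM d hs ht,
    mul_assoc, mul_assoc, aM_mul_aChainM_bottom hs hst ht]
  simp only [mul_assoc]

end

theorem delta_divisible_by_generators (n t s : ℕ) (h : 1 ≤ s ∧ s < t ∧ t ≤ n) :
    deltaM n =
      aM n t s *
        wordM n (aChain n n (n - t - 1) * ag n (t + 1) s *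
           aChain n t (t - s - 1) * aChain n s (s - 1)) ∧
    (∃ u : PosSBKL n, deltaM n = aM n t s * u) ∧
    (∃ v : PosSBKL n, deltaM n = v * aM n t s) := by
  obtain ⟨hs, hst, ht⟩ := h
  have left := deltaM_eq_aM_mul hs hst ht
  exact ⟨left, ⟨_, left⟩, ⟨_, deltaM_eq_mul_aM hs hst ht⟩⟩
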